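/- arXiv:math/0404026 — 3 statements merged into one kernel-verified Lean document; each statement's English description precedes it below -/
import Mathlib

section
/- Let ((A_p)_{p∈G}, (Δ_{p,q}), ε, (S_p)) be a finite-type Hopf G-coalgebra over a field k. Then for all p, q ∈ G and a ∈ A_{pq} one has Δ_{q⁻¹,p⁻¹}(S_{pq}(a)) = τ((S_p ⊗ S_q)(Δ_{p,q}(a))), where τ : A_{p⁻¹} ⊗ A_{q⁻¹} → A_{q⁻¹} ⊗ A_{p⁻¹} is the flip map x ⊗ y ↦ y ⊗ x; moreover ε(S_e(a)) = ε(a) for all a ∈ A_e. -/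
open TensorProduct

universe u v w

variable (k : Type u) [Field k] {G : Type v} [Group G]

/-- Transport of elements along an equality of indices. -/
def castL (A : G → Type w) [∀ p, Ring (A p)] [∀ p, Algebra k (A p)]
    {p q : G} (h : p = q) : A p →ₗ[k] A q := by subst h; exact LinearMap.id

/-- A (finite-type) Hopf `G`-coalgebra: a family of unital `k`-algebras `(A p)`,
comultiplications `Δ p q : A (p*q) → A p ⊗ A q` which are unital algebra maps and
coassociative, a counit `ε : A 1 → k`, and antipode maps `S p : A p → A p⁻¹`. -/
structure HopfGCoalgebra (A : G → Type w) [∀ p, Ring (A p)] [∀ p, Algebra k (A p)] where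
  Δ : ∀ p q : G, A (p * q) →ₐ[k] (A p ⊗[k] A q)
  coassoc : ∀ (p q r : G) (a : A (p * q * r)),
    (Algebra.TensorProduct.assoc k k k (A p) (A q) (A r))
        ((Algebra.TensorProduct.map (Δ p q) (AlgHom.id k (A r))) ((Δ (p * q) r) a))
      = (Algebra.TensorProduct.map (AlgHom.id k (A p)) (Δ q r))
          ((Δ p (q * r)) (castL k A (mul_assoc p q r) a))
  ε : A (1 : G) →ₐ[k] k
  counit_right : ∀ (p : G) (a : A (p * 1)),
    (TensorProduct.rid k (A p))
        (TensorProduct.map LinearMap.id ε.toLinearMap ((Δ p 1) a))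
      = castL k A (mul_one p) a
  counit_left : ∀ (p : G) (a : A (1 * p)),
    (TensorProduct.lid k (A p))
        (TensorProduct.map ε.toLinearMap LinearMap.id ((Δ 1 p) a))
      = castL k A (one_mul p) a
  S : ∀ p : G, A p →ₗ[k] A p⁻¹
  antipode_left : ∀ (p : G) (a : A (p⁻¹ * p)),
    LinearMap.mul' k (A p)
        (TensorProduct.map ((castL k A (inv_inv p)).comp (S p⁻¹)) LinearMap.id
          ((Δ p⁻¹ p) a))
      = ε (castL k A (inv_mul_cancel p) a) • 1
  antipode_right : ∀ (p : G) (a : A (p * p⁻¹)),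
    LinearMap.mul' k (A p)
        (TensorProduct.map LinearMap.id ((castL k A (inv_inv p)).comp (S p⁻¹))
          ((Δ p p⁻¹) a))
      = ε (castL k A (mul_inv_cancel p) a) • 1


set_option linter.unusedSectionVars false
set_option maxHeartbeats 1000000

namespace HopfGCoalgebra
variable {k : Type u} [Field k] {G : Type v} [Group G]
variable {A : G → Type w} [∀ p, Ring (A p)] [∀ p, Algebra k (A p)]

theorem castL_eq_id {p : G} (h : p = p) : castL k A h = LinearMap.id := rfl

theorem castL_comp_castL {p q r : G} (h1 : p = q) (h2 : q = r) :
    (castL k A h2).comp (castL k A h1) = castL k A (h1.trans h2) := by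
  subst h1; subst h2; rfl

theorem castL_castL {p q r : G} (h1 : p = q) (h2 : q = r) (a : A p) :
    castL k A h2 (castL k A h1 a) = castL k A (h1.trans h2) a := by
  subst h1; subst h2; rfl

theorem castL_same {p : G} (h : p = p) (x : A p) : castL k A h x = x := rfl

theorem S_comp_castL (H : HopfGCoalgebra k A) {p p' : G} (h : p = p') :
    (H.S p').comp (castL k A h) = (castL k A (congrArg Inv.inv h)).comp (H.S p) := by
  subst h; rfl

theorem S_castL (H : HopfGCoalgebra k A) {p p' : G} (h : p = p') (x : A p) :
    H.S p' (castL k A h x) = castL k A (congrArg Inv.inv h) (H.S p x) := by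
  subst h; rfl

theorem Δ_castL (H : HopfGCoalgebra k A) {p p' q q' : G} (hp : p = p') (hq : q = q')
    (hpq : p * q = p' * q') (a : A (p * q)) :
    H.Δ p' q' (castL k A hpq a)
      = TensorProduct.map (castL k A hp) (castL k A hq) (H.Δ p q a) := by
  subst hp; subst hq
  simp [castL_eq_id]


theorem map_apply_map {M N P Q P' Q' : Type*} [AddCommMonoid M] [AddCommMonoid N]
    [AddCommMonoid P] [AddCommMonoid Q] [AddCommMonoid P'] [AddCommMonoid Q']
    [Module k M] [Module k N] [Module k P] [Module k Q] [Module k P'] [Module k Q']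
    (f₂ : P →ₗ[k] P') (f₁ : M →ₗ[k] P) (g₂ : Q →ₗ[k] Q') (g₁ : N →ₗ[k] Q) (x : M ⊗[k] N) :
    TensorProduct.map f₂ g₂ (TensorProduct.map f₁ g₁ x)
      = TensorProduct.map (f₂ ∘ₗ f₁) (g₂ ∘ₗ g₁) x := by
  rw [TensorProduct.map_comp]; rfl

theorem theta_left (H : HopfGCoalgebra k A) (g h : G) (hg : g⁻¹ = h) (hgh : g * h = 1)
    (a : A (g * h)) :
    LinearMap.mul' k (A h)
        (TensorProduct.map ((castL k A hg).comp (H.S g)) LinearMap.id (H.Δ g h a))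
      = H.ε (castL k A hgh a) • 1 := by
  have h1 : g = h⁻¹ := by rw [← hg, inv_inv]
  have key := H.antipode_left h (castL k A (congrArg (· * h) h1) a)
  rw [Δ_castL H h1 rfl, castL_castL, map_apply_map] at key
  rw [LinearMap.comp_assoc, S_comp_castL H h1, ← LinearMap.comp_assoc,
    castL_comp_castL, castL_eq_id, LinearMap.id_comp] at key
  exact key

theorem theta_right (H : HopfGCoalgebra k A) (g h : G) (hgh : h⁻¹ = g) (c : g * h = 1)
    (a : A (g * h)) :
    LinearMap.mul' k (A g)
        (TensorProduct.map LinearMap.id ((castL k A hgh).comp (H.S h)) (H.Δ g h a))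
      = H.ε (castL k A c a) • 1 := by
  have h1 : h = g⁻¹ := by rw [← hgh, inv_inv]
  have key := H.antipode_right g (castL k A (congrArg (g * ·) h1) a)
  rw [Δ_castL H rfl h1, castL_castL, map_apply_map] at key
  rw [LinearMap.comp_assoc, S_comp_castL H h1, ← LinearMap.comp_assoc,
    castL_comp_castL, castL_eq_id, LinearMap.id_comp] at key
  exact key

section Conv
variable (B : Type*) [Ring B] [Algebra k B] (H : HopfGCoalgebra k A)

/-- Convolution product of linear maps into an algebra. -/
noncomputable def convK {r s : G} (f : A r →ₗ[k] B) (g : A s →ₗ[k] B) :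
    A (r * s) →ₗ[k] B :=
  LinearMap.mul' k B ∘ₗ TensorProduct.map f g ∘ₗ (H.Δ r s).toLinearMap

/-- The convolution unit. -/
noncomputable def unitL : A (1 : G) →ₗ[k] B :=
  (Algebra.linearMap k B) ∘ₗ H.ε.toLinearMap

theorem coassocL (p q r : G) (a : A (p * q * r)) :
    (TensorProduct.assoc k (A p) (A q) (A r))
        (TensorProduct.map (H.Δ p q).toLinearMap LinearMap.id (H.Δ (p * q) r a))
      = TensorProduct.map LinearMap.id (H.Δ q r).toLinearMap
          (H.Δ p (q * r) (castL k A (mul_assoc p q r) a)) :=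
  H.coassoc p q r a

theorem conv_assoc {r s t : G} (f : A r →ₗ[k] B) (g : A s →ₗ[k] B) (h' : A t →ₗ[k] B) :
    convK B H (convK B H f g) h'
      = (convK B H f (convK B H g h')).comp (castL k A (mul_assoc r s t)) := by
  apply LinearMap.ext; intro a
  have lemA : (LinearMap.mul' k B) ∘ₗ TensorProduct.map (LinearMap.mul' k B ∘ₗ TensorProduct.map f g) h'
      = ((LinearMap.mul' k B) ∘ₗ TensorProduct.map f (LinearMap.mul' k B ∘ₗ TensorProduct.map g h'))
          ∘ₗ (TensorProduct.assoc k (A r) (A s) (A t)).toLinearMap := by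
    ext x y z
    simp [mul_assoc]
  calc convK B H (convK B H f g) h' a
      = ((LinearMap.mul' k B) ∘ₗ TensorProduct.map (LinearMap.mul' k B ∘ₗ TensorProduct.map f g) h')
          (TensorProduct.map (H.Δ r s).toLinearMap LinearMap.id (H.Δ (r * s) t a)) := by
        simp [convK, map_apply_map, LinearMap.comp_assoc]
    _ = ((LinearMap.mul' k B) ∘ₗ TensorProduct.map f (LinearMap.mul' k B ∘ₗ TensorProduct.map g h'))
          ((TensorProduct.assoc k (A r) (A s) (A t))
            (TensorProduct.map (H.Δ r s).toLinearMap LinearMap.id (H.Δ (r * s) t a))) := by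
        rw [lemA]; rfl
    _ = ((LinearMap.mul' k B) ∘ₗ TensorProduct.map f (LinearMap.mul' k B ∘ₗ TensorProduct.map g h'))
          (TensorProduct.map LinearMap.id (H.Δ s t).toLinearMap
            (H.Δ r (s * t) (castL k A (mul_assoc r s t) a))) := by
        rw [coassocL]
    _ = (convK B H f (convK B H g h')).comp (castL k A (mul_assoc r s t)) a := by
        simp [convK, map_apply_map, LinearMap.comp_assoc]

theorem conv_unit_right {r : G} (f : A r →ₗ[k] B) :
    convK B H f (unitL B H) = f ∘ₗ castL k A (mul_one r) := by
  apply LinearMap.ext; intro a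
  have lem : (LinearMap.mul' k B) ∘ₗ TensorProduct.map f (unitL B H)
      = f ∘ₗ (TensorProduct.rid k (A r)).toLinearMap
          ∘ₗ TensorProduct.map LinearMap.id H.ε.toLinearMap := by
    ext x y
    simp [unitL]
    rw [← Algebra.commutes (H.ε y) (f x), ← Algebra.smul_def, ← map_smul, Algebra.smul_def]
  calc convK B H f (unitL B H) a
      = ((LinearMap.mul' k B) ∘ₗ TensorProduct.map f (unitL B H)) (H.Δ r 1 a) := rfl
    _ = f ((TensorProduct.rid k (A r))
          (TensorProduct.map LinearMap.id H.ε.toLinearMap (H.Δ r 1 a))) := by rw [lem]; rfl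
    _ = f (castL k A (mul_one r) a) := by rw [H.counit_right]

theorem conv_unit_left {s : G} (g : A s →ₗ[k] B) :
    convK B H (unitL B H) g = g ∘ₗ castL k A (one_mul s) := by
  apply LinearMap.ext; intro a
  have lem : (LinearMap.mul' k B) ∘ₗ TensorProduct.map (unitL B H) g
      = g ∘ₗ (TensorProduct.lid k (A s)).toLinearMap
          ∘ₗ TensorProduct.map H.ε.toLinearMap LinearMap.id := by
    ext x y
    simp [unitL]
    rw [← Algebra.smul_def, ← map_smul, Algebra.smul_def]
  calc convK B H (unitL B H) g a
      = ((LinearMap.mul' k B) ∘ₗ TensorProduct.map (unitL B H) g) (H.Δ 1 s a) := rfl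
    _ = g ((TensorProduct.lid k (A s))
          (TensorProduct.map H.ε.toLinearMap LinearMap.id (H.Δ 1 s a))) := by rw [lem]; rfl
    _ = g (castL k A (one_mul s) a) := by rw [H.counit_left]

theorem conv_castL_right {r s s' : G} (f : A r →ₗ[k] B) (g : A s →ₗ[k] B) (h : s' = s) :
    convK B H f (g ∘ₗ castL k A h)
      = (convK B H f g) ∘ₗ castL k A (congrArg (r * ·) h) := by
  subst h
  simp [castL_eq_id]

theorem conv_castL_left {r r' s : G} (f : A r →ₗ[k] B) (g : A s →ₗ[k] B) (h : r' = r) :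
    convK B H (f ∘ₗ castL k A h) g
      = (convK B H f g) ∘ₗ castL k A (congrArg (· * s) h) := by
  subst h
  simp [castL_eq_id]

end Conv

theorem mul'_comp_map_alg {C B : Type*} [Ring C] [Algebra k C] [Ring B] [Algebra k B]
    {M N : Type*} [AddCommMonoid M] [AddCommMonoid N] [Module k M] [Module k N]
    (Φ : C →ₐ[k] B) (u : M →ₗ[k] C) (v : N →ₗ[k] C) :
    (LinearMap.mul' k B) ∘ₗ TensorProduct.map (Φ.toLinearMap ∘ₗ u) (Φ.toLinearMap ∘ₗ v)
      = Φ.toLinearMap ∘ₗ (LinearMap.mul' k C) ∘ₗ TensorProduct.map u v := by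
  ext x y; simp

theorem claimA (H : HopfGCoalgebra k A) (p q : G) (hA : (p * q) * (q⁻¹ * p⁻¹) = 1) :
    convK (A q⁻¹ ⊗[k] A p⁻¹) H
      ((H.Δ q⁻¹ p⁻¹).toLinearMap ∘ₗ (castL k A (mul_inv_rev p q)).comp (H.S (p * q)))
      (H.Δ q⁻¹ p⁻¹).toLinearMap
    = unitL (A q⁻¹ ⊗[k] A p⁻¹) H ∘ₗ castL k A hA := by
  apply LinearMap.ext; intro a
  have pull := mul'_comp_map_alg (H.Δ q⁻¹ p⁻¹)
      ((castL k A (mul_inv_rev p q)).comp (H.S (p * q)))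
      (LinearMap.id : A (q⁻¹ * p⁻¹) →ₗ[k] A (q⁻¹ * p⁻¹))
  calc convK (A q⁻¹ ⊗[k] A p⁻¹) H ((H.Δ q⁻¹ p⁻¹).toLinearMap ∘ₗ (castL k A (mul_inv_rev p q)).comp (H.S (p * q))) (H.Δ q⁻¹ p⁻¹).toLinearMap a
      = ((LinearMap.mul' k (A q⁻¹ ⊗[k] A p⁻¹)) ∘ₗ
          TensorProduct.map
            ((H.Δ q⁻¹ p⁻¹).toLinearMap ∘ₗ (castL k A (mul_inv_rev p q)).comp (H.S (p * q)))
            ((H.Δ q⁻¹ p⁻¹).toLinearMap ∘ₗ LinearMap.id))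
          (H.Δ (p * q) (q⁻¹ * p⁻¹) a) := by
        simp [convK]
    _ = (H.Δ q⁻¹ p⁻¹)
          ((LinearMap.mul' k (A (q⁻¹ * p⁻¹)))
            (TensorProduct.map ((castL k A (mul_inv_rev p q)).comp (H.S (p * q))) LinearMap.id
              (H.Δ (p * q) (q⁻¹ * p⁻¹) a))) := by
        rw [pull]; rfl
    _ = (H.Δ q⁻¹ p⁻¹) (H.ε (castL k A hA a) • 1) := by
        rw [theta_left H (p * q) (q⁻¹ * p⁻¹) (mul_inv_rev p q) hA a]
    _ = unitL (A q⁻¹ ⊗[k] A p⁻¹) H (castL k A hA a) := by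
        simp [unitL, Algebra.algebraMap_eq_smul_one]

theorem claimB (H : HopfGCoalgebra k A) (p q : G) (hB : (q⁻¹ * p⁻¹) * (p * q) = 1) :
    convK (A q⁻¹ ⊗[k] A p⁻¹) H (H.Δ q⁻¹ p⁻¹).toLinearMap
      ((TensorProduct.comm k (A p⁻¹) (A q⁻¹)).toLinearMap
        ∘ₗ TensorProduct.map (H.S p) (H.S q) ∘ₗ (H.Δ p q).toLinearMap)
    = unitL (A q⁻¹ ⊗[k] A p⁻¹) H ∘ₗ castL k A hB := by
  apply LinearMap.ext; intro a
  -- abbreviations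
  set Cm : (A p⁻¹ ⊗[k] A p) ⊗[k] A q →ₗ[k] A p⁻¹ ⊗[k] (A q⁻¹ ⊗[k] A p⁻¹) := 0 with hCm0
  clear hCm0 Cm
  have c₁ : (q⁻¹ * p⁻¹) * (p * q) = q⁻¹ * (p⁻¹ * (p * q)) := mul_assoc q⁻¹ p⁻¹ (p * q)
  have c₂ : p⁻¹ * p * q = p⁻¹ * (p * q) := mul_assoc p⁻¹ p q
  have c₈ : p⁻¹ * (p * q) = q := by group
  have c₆ : (p⁻¹ * p) * q = 1 * q := congrArg (· * q) (inv_mul_cancel p)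
  -- the inner coassociativity rearrangement
  have inner_eq :
      TensorProduct.map LinearMap.id
          ((TensorProduct.comm k (A p⁻¹) (A q⁻¹)).toLinearMap
            ∘ₗ TensorProduct.map (H.S p) (H.S q) ∘ₗ (H.Δ p q).toLinearMap)
        ∘ₗ (H.Δ p⁻¹ (p * q)).toLinearMap
      = TensorProduct.map LinearMap.id
            ((TensorProduct.comm k (A p⁻¹) (A q⁻¹)).toLinearMap
              ∘ₗ TensorProduct.map (H.S p) (H.S q))
          ∘ₗ (TensorProduct.assoc k (A p⁻¹) (A p) (A q)).toLinearMap
          ∘ₗ TensorProduct.map (H.Δ p⁻¹ p).toLinearMap LinearMap.id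
          ∘ₗ (H.Δ (p⁻¹ * p) q).toLinearMap ∘ₗ castL k A c₂.symm := by
    apply LinearMap.ext; intro x
    have h := coassocL H p⁻¹ p q (castL k A c₂.symm x)
    rw [castL_castL] at h
    have hx : castL k A (c₂.symm.trans (mul_assoc p⁻¹ p q)) x = x := rfl
    rw [hx] at h
    simp only [LinearMap.coe_comp, Function.comp_apply, LinearEquiv.coe_coe,
      AlgHom.toLinearMap_apply]
    rw [h, map_apply_map]
    simp [LinearMap.comp_assoc]

  -- naturality of the associator
  have N1 : (TensorProduct.map LinearMap.id
          ((TensorProduct.comm k (A p⁻¹) (A q⁻¹)).toLinearMap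
            ∘ₗ TensorProduct.map (H.S p) (H.S q) ∘ₗ (H.Δ p q).toLinearMap))
        ∘ₗ (TensorProduct.assoc k (A q⁻¹) (A p⁻¹) (A (p * q))).symm.toLinearMap
      = (TensorProduct.assoc k (A q⁻¹) (A p⁻¹) (A q⁻¹ ⊗[k] A p⁻¹)).symm.toLinearMap
        ∘ₗ TensorProduct.map LinearMap.id (TensorProduct.map LinearMap.id
          ((TensorProduct.comm k (A p⁻¹) (A q⁻¹)).toLinearMap
            ∘ₗ TensorProduct.map (H.S p) (H.S q) ∘ₗ (H.Δ p q).toLinearMap)) := by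
    ext x y z
    simp
  have N2 : (LinearMap.mul' k (A q⁻¹ ⊗[k] A p⁻¹))
        ∘ₗ (TensorProduct.assoc k (A q⁻¹) (A p⁻¹) (A q⁻¹ ⊗[k] A p⁻¹)).symm.toLinearMap
        ∘ₗ TensorProduct.map LinearMap.id
            (TensorProduct.map LinearMap.id
                ((TensorProduct.comm k (A p⁻¹) (A q⁻¹)).toLinearMap
                  ∘ₗ TensorProduct.map (H.S p) (H.S q))
              ∘ₗ (TensorProduct.assoc k (A p⁻¹) (A p) (A q)).toLinearMap)
      = TensorProduct.map
            (LinearMap.mul' k (A q⁻¹) ∘ₗ TensorProduct.map LinearMap.id (H.S q))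
            (LinearMap.mul' k (A p⁻¹) ∘ₗ TensorProduct.map LinearMap.id (H.S p))
        ∘ₗ (TensorProduct.assoc k (A q⁻¹) (A q) (A p⁻¹ ⊗[k] A p)).symm.toLinearMap
        ∘ₗ TensorProduct.map LinearMap.id
            (TensorProduct.comm k (A p⁻¹ ⊗[k] A p) (A q)).toLinearMap := by
    ext x w1 w2 y
    simp [Algebra.TensorProduct.tmul_mul_tmul]
  have N3 : ((TensorProduct.assoc k (A q⁻¹) (A q) (A p⁻¹ ⊗[k] A p)).symm.toLinearMap
        ∘ₗ TensorProduct.map LinearMap.id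
            (TensorProduct.comm k (A p⁻¹ ⊗[k] A p) (A q)).toLinearMap)
        ∘ₗ TensorProduct.map LinearMap.id
            (TensorProduct.map (H.Δ p⁻¹ p).toLinearMap LinearMap.id)
      = TensorProduct.map LinearMap.id (H.Δ p⁻¹ p).toLinearMap
        ∘ₗ (TensorProduct.assoc k (A q⁻¹) (A q) (A (p⁻¹ * p))).symm.toLinearMap
        ∘ₗ TensorProduct.map LinearMap.id
            (TensorProduct.comm k (A (p⁻¹ * p)) (A q)).toLinearMap := by
    ext x w y
    simp
  have θ₂eq : ((LinearMap.mul' k (A p⁻¹)) ∘ₗ TensorProduct.map LinearMap.id (H.S p))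
        ∘ₗ (H.Δ p⁻¹ p).toLinearMap
      = Algebra.linearMap k (A p⁻¹) ∘ₗ H.ε.toLinearMap ∘ₗ castL k A (inv_mul_cancel p) := by
    apply LinearMap.ext; intro x
    have h := theta_right H p⁻¹ p rfl (inv_mul_cancel p) x
    rw [castL_eq_id, LinearMap.id_comp] at h
    simpa [Algebra.algebraMap_eq_smul_one] using h
  have N4 : TensorProduct.map
          (LinearMap.mul' k (A q⁻¹) ∘ₗ TensorProduct.map LinearMap.id (H.S q))
          (Algebra.linearMap k (A p⁻¹) ∘ₗ H.ε.toLinearMap ∘ₗ castL k A (inv_mul_cancel p))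
        ∘ₗ (TensorProduct.assoc k (A q⁻¹) (A q) (A (p⁻¹ * p))).symm.toLinearMap
        ∘ₗ TensorProduct.map LinearMap.id
            (TensorProduct.comm k (A (p⁻¹ * p)) (A q)).toLinearMap
      = ((TensorProduct.mk k (A q⁻¹) (A p⁻¹)).flip 1)
        ∘ₗ (LinearMap.mul' k (A q⁻¹) ∘ₗ TensorProduct.map LinearMap.id (H.S q))
        ∘ₗ TensorProduct.map LinearMap.id
            ((TensorProduct.lid k (A q)).toLinearMap
              ∘ₗ TensorProduct.map (H.ε.toLinearMap ∘ₗ castL k A (inv_mul_cancel p))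
                  LinearMap.id) := by
    ext x w y
    simp [Algebra.algebraMap_eq_smul_one, TensorProduct.smul_tmul, mul_smul_comm]
  have inner2 : ((TensorProduct.lid k (A q)).toLinearMap
        ∘ₗ TensorProduct.map (H.ε.toLinearMap ∘ₗ castL k A (inv_mul_cancel p)) LinearMap.id)
        ∘ₗ ((H.Δ (p⁻¹ * p) q).toLinearMap ∘ₗ castL k A c₂.symm)
      = castL k A c₈ := by
    apply LinearMap.ext; intro x
    have split := TensorProduct.map_comp (f₂ := H.ε.toLinearMap) (f₁ := castL k A (inv_mul_cancel p))
      (g₂ := (LinearMap.id : A q →ₗ[k] A q)) (g₁ := LinearMap.id)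
    rw [LinearMap.id_comp] at split
    have hc := Δ_castL H (inv_mul_cancel p) rfl c₆ (castL k A c₂.symm x)
    rw [castL_eq_id] at hc
    simp only [LinearMap.coe_comp, Function.comp_apply, LinearEquiv.coe_coe,
      AlgHom.toLinearMap_apply]
    rw [split]
    simp only [LinearMap.coe_comp, Function.comp_apply]
    rw [← hc, H.counit_left q, castL_castL, castL_castL]
  -- assemble
  have co1 := coassocL H q⁻¹ p⁻¹ (p * q) a
  have e1 : TensorProduct.map (H.Δ q⁻¹ p⁻¹).toLinearMap LinearMap.id
        (H.Δ (q⁻¹ * p⁻¹) (p * q) a)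
      = (TensorProduct.assoc k (A q⁻¹) (A p⁻¹) (A (p * q))).symm
          (TensorProduct.map LinearMap.id (H.Δ p⁻¹ (p * q)).toLinearMap
            (H.Δ q⁻¹ (p⁻¹ * (p * q)) (castL k A c₁ a))) := by
    rw [← co1, LinearEquiv.symm_apply_apply]
  have step1 : convK (A q⁻¹ ⊗[k] A p⁻¹) H (H.Δ q⁻¹ p⁻¹).toLinearMap
      ((TensorProduct.comm k (A p⁻¹) (A q⁻¹)).toLinearMap
        ∘ₗ TensorProduct.map (H.S p) (H.S q) ∘ₗ (H.Δ p q).toLinearMap) a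
      = LinearMap.mul' k (A q⁻¹ ⊗[k] A p⁻¹)
          (TensorProduct.map LinearMap.id
            ((TensorProduct.comm k (A p⁻¹) (A q⁻¹)).toLinearMap
              ∘ₗ TensorProduct.map (H.S p) (H.S q) ∘ₗ (H.Δ p q).toLinearMap)
            (TensorProduct.map (H.Δ q⁻¹ p⁻¹).toLinearMap LinearMap.id
              (H.Δ (q⁻¹ * p⁻¹) (p * q) a))) := by
    simp [convK, map_apply_map]
  have step2 := LinearMap.congr_fun N1
    (TensorProduct.map LinearMap.id (H.Δ p⁻¹ (p * q)).toLinearMap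
      (H.Δ q⁻¹ (p⁻¹ * (p * q)) (castL k A c₁ a)))
  simp only [LinearMap.coe_comp, Function.comp_apply, LinearEquiv.coe_coe] at step2
  have step4m : TensorProduct.map (LinearMap.id : A q⁻¹ →ₗ[k] A q⁻¹)
        (TensorProduct.map LinearMap.id
            ((TensorProduct.comm k (A p⁻¹) (A q⁻¹)).toLinearMap
              ∘ₗ TensorProduct.map (H.S p) (H.S q))
          ∘ₗ (TensorProduct.assoc k (A p⁻¹) (A p) (A q)).toLinearMap
          ∘ₗ TensorProduct.map (H.Δ p⁻¹ p).toLinearMap LinearMap.id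
          ∘ₗ (H.Δ (p⁻¹ * p) q).toLinearMap ∘ₗ castL k A c₂.symm)
      = TensorProduct.map LinearMap.id
          (TensorProduct.map LinearMap.id
              ((TensorProduct.comm k (A p⁻¹) (A q⁻¹)).toLinearMap
                ∘ₗ TensorProduct.map (H.S p) (H.S q))
            ∘ₗ (TensorProduct.assoc k (A p⁻¹) (A p) (A q)).toLinearMap)
        ∘ₗ TensorProduct.map LinearMap.id
            (TensorProduct.map (H.Δ p⁻¹ p).toLinearMap LinearMap.id)
        ∘ₗ TensorProduct.map LinearMap.id
            ((H.Δ (p⁻¹ * p) q).toLinearMap ∘ₗ castL k A c₂.symm) := by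
    rw [← TensorProduct.map_comp, ← TensorProduct.map_comp]
    simp [LinearMap.comp_assoc]
  have step5 := LinearMap.congr_fun N2
    (TensorProduct.map LinearMap.id
        (TensorProduct.map (H.Δ p⁻¹ p).toLinearMap LinearMap.id)
      (TensorProduct.map LinearMap.id
        ((H.Δ (p⁻¹ * p) q).toLinearMap ∘ₗ castL k A c₂.symm)
        (H.Δ q⁻¹ (p⁻¹ * (p * q)) (castL k A c₁ a))))
  simp only [LinearMap.coe_comp, Function.comp_apply, LinearEquiv.coe_coe] at step5
  have step6 := LinearMap.congr_fun N3
    (TensorProduct.map LinearMap.id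
      ((H.Δ (p⁻¹ * p) q).toLinearMap ∘ₗ castL k A c₂.symm)
      (H.Δ q⁻¹ (p⁻¹ * (p * q)) (castL k A c₁ a)))
  simp only [LinearMap.coe_comp, Function.comp_apply, LinearEquiv.coe_coe] at step6
  have step8 := LinearMap.congr_fun N4
    (TensorProduct.map LinearMap.id
      ((H.Δ (p⁻¹ * p) q).toLinearMap ∘ₗ castL k A c₂.symm)
      (H.Δ q⁻¹ (p⁻¹ * (p * q)) (castL k A c₁ a)))
  simp only [LinearMap.coe_comp, Function.comp_apply, LinearEquiv.coe_coe] at step8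
  have hz := Δ_castL H rfl c₈ (congrArg (q⁻¹ * ·) c₈) (castL k A c₁ a)
  rw [castL_eq_id, castL_castL] at hz
  have step11 := theta_right H q⁻¹ q rfl (inv_mul_cancel q)
    (castL k A (c₁.trans (congrArg (q⁻¹ * ·) c₈)) a)
  rw [castL_eq_id, LinearMap.id_comp, castL_castL] at step11
  -- assemble everything
  simp only [LinearMap.coe_comp, Function.comp_apply]
  rw [step1, e1, step2, map_apply_map, LinearMap.id_comp, inner_eq, step4m]
  simp only [LinearMap.coe_comp, Function.comp_apply]
  have step9 : TensorProduct.map LinearMap.id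
        ((TensorProduct.lid k (A q)).toLinearMap
          ∘ₗ TensorProduct.map (H.ε.toLinearMap ∘ₗ castL k A (inv_mul_cancel p)) LinearMap.id)
        (TensorProduct.map LinearMap.id
          ((H.Δ (p⁻¹ * p) q).toLinearMap ∘ₗ castL k A c₂.symm)
          (H.Δ q⁻¹ (p⁻¹ * (p * q)) (castL k A c₁ a)))
      = TensorProduct.map LinearMap.id (castL k A c₈)
          (H.Δ q⁻¹ (p⁻¹ * (p * q)) (castL k A c₁ a)) := by
    rw [map_apply_map, LinearMap.id_comp, inner2]
  rw [step5, step6, map_apply_map, LinearMap.comp_id, θ₂eq, step8, step9, ← hz, step11]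
  simp [unitL, Algebra.TensorProduct.algebraMap_apply, Algebra.algebraMap_eq_smul_one,
    TensorProduct.smul_tmul, Algebra.TensorProduct.one_def]


theorem main_part1 (H : HopfGCoalgebra k A) (p q : G) (a : A (p * q)) :
    H.Δ q⁻¹ p⁻¹ (castL k A (mul_inv_rev p q) (H.S (p * q) a))
      = TensorProduct.comm k (A p⁻¹) (A q⁻¹)
          (TensorProduct.map (H.S p) (H.S q) (H.Δ p q a)) := by
  have hA : (p * q) * (q⁻¹ * p⁻¹) = 1 := by group
  have hB : (q⁻¹ * p⁻¹) * (p * q) = 1 := by group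
  have cA := claimA H p q hA
  have cB := claimB H p q hB
  have e2 : unitL (A q⁻¹ ⊗[k] A p⁻¹) H
      = convK (A q⁻¹ ⊗[k] A p⁻¹) H
          ((H.Δ q⁻¹ p⁻¹).toLinearMap ∘ₗ (castL k A (mul_inv_rev p q)).comp (H.S (p * q)))
          (H.Δ q⁻¹ p⁻¹).toLinearMap ∘ₗ castL k A hA.symm := by
    rw [cA, LinearMap.comp_assoc, castL_comp_castL, castL_eq_id, LinearMap.comp_id]
  have E1 := LinearMap.congr_fun
    (conv_unit_left (A q⁻¹ ⊗[k] A p⁻¹) H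
      ((TensorProduct.comm k (A p⁻¹) (A q⁻¹)).toLinearMap
        ∘ₗ TensorProduct.map (H.S p) (H.S q) ∘ₗ (H.Δ p q).toLinearMap))
    (castL k A (one_mul (p * q)).symm a)
  rw [e2, conv_castL_left, conv_assoc, cB, conv_castL_right, conv_unit_right] at E1
  simp only [LinearMap.coe_comp, Function.comp_apply, LinearEquiv.coe_coe,
    AlgHom.toLinearMap_apply, castL_castL, castL_same] at E1
  simpa using E1

theorem main_part2 (H : HopfGCoalgebra k A) (b : A (1 : G)) :
    H.ε (castL k A inv_one (H.S 1 b)) = H.ε b := by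
  have e4 : H.ε.toLinearMap ∘ₗ (LinearMap.mul' k (A (1:G)))
        ∘ₗ TensorProduct.map ((castL k A inv_one).comp (H.S 1)) LinearMap.id
      = (H.ε.toLinearMap ∘ₗ (castL k A inv_one).comp (H.S 1))
          ∘ₗ (TensorProduct.rid k (A (1:G))).toLinearMap
          ∘ₗ TensorProduct.map LinearMap.id H.ε.toLinearMap := by
    ext x y
    simp [mul_comm]
  have hx : castL k A (mul_one (1:G)) (castL k A (mul_one (1:G)).symm b) = b := by
    rw [castL_castL]; rfl
  have E := LinearMap.congr_fun e4 (H.Δ 1 1 (castL k A (mul_one (1:G)).symm b))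
  simp only [LinearMap.coe_comp, Function.comp_apply, LinearEquiv.coe_coe,
    AlgHom.toLinearMap_apply] at E
  rw [H.counit_right, hx] at E
  have E2 : H.ε (LinearMap.mul' k (A (1:G))
      (TensorProduct.map ((castL k A inv_one).comp (H.S 1)) LinearMap.id
        (H.Δ 1 1 (castL k A (mul_one (1:G)).symm b))))
      = H.ε b := by
    rw [theta_left H 1 1 inv_one (mul_one 1) (castL k A (mul_one (1:G)).symm b), hx]
    simp
  exact E.symm.trans E2

end HopfGCoalgebra

/-- the antipode of a finite-type Hopf `G`-coalgebra is an
anti-coalgebra map: `Δ_{q⁻¹,p⁻¹}(S_{pq}(a)) = τ((S_p ⊗ S_q)(Δ_{p,q}(a)))`, and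
`ε ∘ S_e = ε`. -/
theorem antipode_anti_coalgebra
    {k : Type u} [Field k] {G : Type v} [Group G]
    (A : G → Type w) [∀ p, Ring (A p)] [∀ p, Algebra k (A p)]
    [∀ p, FiniteDimensional k (A p)]
    (H : HopfGCoalgebra k A) :
    (∀ (p q : G) (a : A (p * q)),
      H.Δ q⁻¹ p⁻¹ (castL k A (mul_inv_rev p q) (H.S (p * q) a))
        = TensorProduct.comm k (A p⁻¹) (A q⁻¹)
            (TensorProduct.map (H.S p) (H.S q) (H.Δ p q a))) ∧
    (∀ a : A (1 : G), H.ε (castL k A inv_one (H.S 1 a)) = H.ε a) := by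
  exact ⟨fun p q a => HopfGCoalgebra.main_part1 H p q a,
    fun a => HopfGCoalgebra.main_part2 H a⟩
end

section
/- Let ((A_p)_{p∈G}, (Δ_{p,q}), ε, (S_p)) be a finite-type Hopf G-coalgebra over a field k. If (φ_p)_{p∈G} and (ψ_p)_{p∈G} are two left integrals and φ_{p₀} ≠ 0 for some p₀ ∈ G, then there exists a scalar c ∈ k such that ψ_p = c·φ_p for all p ∈ G. -/
open TensorProduct

universe u v w

variable (k : Type u) [Field k] {G : Type v} [Group G]

/-- A left integral on a Hopf `G`-coalgebra: a family of functionals `φ p : A p → k`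
with `(id ⊗ φ q)(Δ p q a) = φ (pq) a • 1` in `A p`. -/
def HopfGCoalgebra.IsLeftIntegral
    {k : Type u} [Field k] {G : Type v} [Group G]
    {A : G → Type w} [∀ p, Ring (A p)] [∀ p, Algebra k (A p)]
    (H : HopfGCoalgebra k A) (φ : ∀ p : G, A p →ₗ[k] k) : Prop :=
  ∀ (p q : G) (a : A (p * q)),
    (TensorProduct.rid k (A p))
        (TensorProduct.map LinearMap.id (φ q) ((H.Δ p q) a))
      = φ (p * q) a • 1

set_option linter.unusedSectionVars false
set_option linter.unnecessarySimpa false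
set_option maxHeartbeats 1000000
set_option synthInstance.maxHeartbeats 400000

section PartA
variable {𝕜 : Type u} [Field 𝕜] {B : Type w} [Ring B] [Algebra 𝕜 B]

lemma tmap_tmap {M N P Q R S : Type*} [AddCommMonoid M] [AddCommMonoid N]
    [AddCommMonoid P] [AddCommMonoid Q] [AddCommMonoid R] [AddCommMonoid S]
    [Module 𝕜 M] [Module 𝕜 N] [Module 𝕜 P] [Module 𝕜 Q] [Module 𝕜 R] [Module 𝕜 S]
    (f₂ : P →ₗ[𝕜] R) (g₂ : Q →ₗ[𝕜] S) (f₁ : M →ₗ[𝕜] P) (g₁ : N →ₗ[𝕜] Q) (u : M ⊗[𝕜] N) :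
    TensorProduct.map f₂ g₂ (TensorProduct.map f₁ g₁ u)
      = TensorProduct.map (f₂ ∘ₗ f₁) (g₂ ∘ₗ g₁) u := by
  rw [TensorProduct.map_comp]; rfl



/-- `(1 ⊗ a) * t = (id ⊗ L_a) t`. -/
lemma one_tmul_mul (a : B) (t : B ⊗[𝕜] B) :
    (1 ⊗ₜ[𝕜] a) * t
      = TensorProduct.map LinearMap.id (LinearMap.mulLeft 𝕜 a) t := by
  induction t using TensorProduct.induction_on with
  | zero => simp
  | tmul x y => simp [Algebra.TensorProduct.tmul_mul_tmul]
  | add u v hu hv => simp [mul_add, hu, hv]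

lemma map_smulRight_eps (f : B →ₗ[𝕜] 𝕜) (u : B ⊗[𝕜] B) :
    (TensorProduct.map (f.smulRight (1 : B)) LinearMap.id) u
      = 1 ⊗ₜ[𝕜] ((TensorProduct.lid 𝕜 B) (TensorProduct.map f LinearMap.id u)) := by
  induction u using TensorProduct.induction_on with
  | zero => simp
  | tmul x y => simp [smul_tmul, tmul_smul]
  | add u v hu hv => simp [hu, hv, tmul_add]

lemma mul'_map_smulRight (s : B →ₗ[𝕜] B) (f : B →ₗ[𝕜] 𝕜) (u : B ⊗[𝕜] B) :
    LinearMap.mul' 𝕜 B ((TensorProduct.map s (f.smulRight (1 : B))) u)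
      = s ((TensorProduct.rid 𝕜 B) (TensorProduct.map LinearMap.id f u)) := by
  induction u using TensorProduct.induction_on with
  | zero => simp
  | tmul x y => simp [mul_smul_comm]
  | add u v hu hv => simp [hu, hv]


/-- Key trilinear regrouping lemma. -/
lemma key_lemma (s : B →ₗ[𝕜] B) (lam : B →ₗ[𝕜] 𝕜)
    (X : (B ⊗[𝕜] B) ⊗[𝕜] B) (v : B ⊗[𝕜] B) :
    LinearMap.mul' 𝕜 B ((TensorProduct.map s
        (((TensorProduct.rid 𝕜 B).toLinearMap ∘ₗ TensorProduct.map LinearMap.id lam) ∘ₗ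
          LinearMap.mulRight 𝕜 v)) ((TensorProduct.assoc 𝕜 B B B) X))
      = ((TensorProduct.rid 𝕜 B).toLinearMap ∘ₗ TensorProduct.map LinearMap.id lam)
          ((TensorProduct.map (LinearMap.mul' 𝕜 B ∘ₗ TensorProduct.map s LinearMap.id)
            LinearMap.id X) * v) := by
  have hmr : LinearMap.mulRight 𝕜 (0 : B ⊗[𝕜] B) = 0 := by
    ext u; simp
  induction v using TensorProduct.induction_on with
  | zero =>
      rw [hmr, LinearMap.comp_zero, TensorProduct.map_zero_right, mul_zero]
      simp
  | add v₁ v₂ h₁ h₂ =>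
      have hm : LinearMap.mulRight 𝕜 (v₁ + v₂)
          = LinearMap.mulRight 𝕜 v₁ + LinearMap.mulRight 𝕜 v₂ := by
        ext u; simp [mul_add]
      rw [hm, LinearMap.comp_add, TensorProduct.map_add_right, LinearMap.add_apply,
        map_add, h₁, h₂, mul_add, map_add]
  | tmul p q =>
      have hz : (TensorProduct.assoc 𝕜 B B B) (0 : (B ⊗[𝕜] B) ⊗[𝕜] B) = 0 :=
        (TensorProduct.assoc 𝕜 B B B).map_zero
      induction X using TensorProduct.induction_on with
      | zero =>
          rw [map_zero, map_zero, map_zero, map_zero, zero_mul, map_zero]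
      | tmul Y z =>
          induction Y using TensorProduct.induction_on with
          | zero => simp [zero_tmul]
          | tmul x y =>
              simp [Algebra.TensorProduct.tmul_mul_tmul, mul_assoc, mul_smul_comm,
                smul_mul_assoc]
          | add Y₁ Y₂ h₁ h₂ =>
              simp only [add_tmul, map_add, add_mul] at h₁ h₂ ⊢
              rw [h₁, h₂]
      | add X₁ X₂ h₁ h₂ =>
          simp only [map_add, add_mul] at h₁ h₂ ⊢
          rw [h₁, h₂]

/-- Identity (i): `Σ S(a₁)a₂ ⊗ a₃ = 1 ⊗ a`. -/
lemma sweedler_one (δ : B →ₐ[𝕜] B ⊗[𝕜] B) (ε : B →ₐ[𝕜] 𝕜) (s : B →ₗ[𝕜] B)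
    (counit_l : ∀ x : B, (TensorProduct.lid 𝕜 B)
      (TensorProduct.map ε.toLinearMap LinearMap.id (δ x)) = x)
    (anti_l : ∀ x : B, LinearMap.mul' 𝕜 B
      (TensorProduct.map s LinearMap.id (δ x)) = ε x • 1)
    (a : B) :
    (TensorProduct.map (LinearMap.mul' 𝕜 B ∘ₗ TensorProduct.map s LinearMap.id)
        LinearMap.id) ((TensorProduct.map δ.toLinearMap LinearMap.id) (δ a))
      = 1 ⊗ₜ[𝕜] a := by
  have h1 : (LinearMap.mul' 𝕜 B ∘ₗ TensorProduct.map s LinearMap.id) ∘ₗ δ.toLinearMap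
      = ε.toLinearMap.smulRight 1 := by
    ext x
    simpa using anti_l x
  rw [tmap_tmap, LinearMap.id_comp, h1, map_smulRight_eps ε.toLinearMap (δ a), counit_l]

/-- Strong invariance: `Σ b₁ λ(a b₂) = Σ S(a₁) λ(a₂ b)`. -/
lemma strong_invariance (δ : B →ₐ[𝕜] B ⊗[𝕜] B) (ε : B →ₐ[𝕜] 𝕜) (s : B →ₗ[𝕜] B)
    (coassoc : ∀ x : B, (TensorProduct.assoc 𝕜 B B B)
        ((TensorProduct.map δ.toLinearMap LinearMap.id) (δ x))
      = (TensorProduct.map LinearMap.id δ.toLinearMap) (δ x))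
    (counit_l : ∀ x : B, (TensorProduct.lid 𝕜 B)
      (TensorProduct.map ε.toLinearMap LinearMap.id (δ x)) = x)
    (anti_l : ∀ x : B, LinearMap.mul' 𝕜 B
      (TensorProduct.map s LinearMap.id (δ x)) = ε x • 1)
    (lam : B →ₗ[𝕜] 𝕜)
    (intlam : ∀ x : B, (TensorProduct.rid 𝕜 B)
      (TensorProduct.map LinearMap.id lam (δ x)) = lam x • 1)
    (a b : B) :
    (TensorProduct.rid 𝕜 B) (TensorProduct.map LinearMap.id lam ((1 ⊗ₜ[𝕜] a) * δ b))
      = LinearMap.mul' 𝕜 B ((TensorProduct.map s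
          ((lam ∘ₗ LinearMap.mulRight 𝕜 b).smulRight (1 : B))) (δ a)) := by
  have hcomp : (((TensorProduct.rid 𝕜 B).toLinearMap ∘ₗ TensorProduct.map LinearMap.id lam)
        ∘ₗ LinearMap.mulRight 𝕜 (δ b)) ∘ₗ δ.toLinearMap
      = (lam ∘ₗ LinearMap.mulRight 𝕜 b).smulRight (1 : B) := by
    ext x
    have hmul : δ x * δ b = δ (x * b) := (map_mul δ x b).symm
    simp only [LinearMap.comp_apply, LinearMap.mulRight_apply, AlgHom.toLinearMap_apply,
      hmul, LinearEquiv.coe_coe, LinearMap.smulRight_apply]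
    rw [intlam (x * b)]
  have step1 : (TensorProduct.rid 𝕜 B)
      (TensorProduct.map LinearMap.id lam ((1 ⊗ₜ[𝕜] a) * δ b))
      = ((TensorProduct.rid 𝕜 B).toLinearMap ∘ₗ TensorProduct.map LinearMap.id lam)
          (((TensorProduct.map (LinearMap.mul' 𝕜 B ∘ₗ TensorProduct.map s LinearMap.id)
          LinearMap.id) ((TensorProduct.map δ.toLinearMap LinearMap.id) (δ a))) * δ b) := by
    rw [sweedler_one δ ε s counit_l anti_l a]
    rfl
  rw [step1, ← key_lemma s lam ((TensorProduct.map δ.toLinearMap LinearMap.id) (δ a)) (δ b),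
    coassoc a, tmap_tmap, LinearMap.comp_id, hcomp]

end PartA

section Main
variable {𝕜 : Type u} [Field 𝕜] {B : Type w} [Ring B] [Algebra 𝕜 B]
variable [FiniteDimensional 𝕜 B]


/-- The `i`-th left coordinate of a tensor w.r.t. a basis on the left factor. -/
noncomputable def tcomp (b : Module.Basis (Fin (Module.finrank 𝕜 B)) 𝕜 B)
    (i : Fin (Module.finrank 𝕜 B)) : B ⊗[𝕜] B →ₗ[𝕜] B :=
  (TensorProduct.lid 𝕜 B).toLinearMap ∘ₗ TensorProduct.map (b.coord i) LinearMap.id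

lemma tcomp_tmul (b : Module.Basis (Fin (Module.finrank 𝕜 B)) 𝕜 B) (i) (x y : B) :
    tcomp b i (x ⊗ₜ[𝕜] y) = b.repr x i • y := by
  simp [tcomp]

lemma tensor_decomp (b : Module.Basis (Fin (Module.finrank 𝕜 B)) 𝕜 B) (t : B ⊗[𝕜] B) :
    t = ∑ i, b i ⊗ₜ[𝕜] tcomp b i t := by
  induction t using TensorProduct.induction_on with
  | zero => simp
  | tmul x y =>
      have : ∀ i, b i ⊗ₜ[𝕜] tcomp b i (x ⊗ₜ[𝕜] y) = (b.repr x i • b i) ⊗ₜ[𝕜] y := by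
        intro i; rw [tcomp_tmul]; exact (smul_tmul _ _ _).symm
      rw [Finset.sum_congr rfl fun i _ => this i, ← TensorProduct.sum_tmul,
        b.sum_repr x]
  | add u v hu hv =>
      simp only [map_add, tmul_add]
      rw [Finset.sum_add_distrib, ← hu, ← hv]

lemma rid_map_decomp (b : Module.Basis (Fin (Module.finrank 𝕜 B)) 𝕜 B)
    (f : B →ₗ[𝕜] 𝕜) (t : B ⊗[𝕜] B) :
    (TensorProduct.rid 𝕜 B) (TensorProduct.map LinearMap.id f t)
      = ∑ i, f (tcomp b i t) • b i := by
  conv_lhs => rw [tensor_decomp b t]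
  simp

lemma coeff_zero_of_sum (b : Module.Basis (Fin (Module.finrank 𝕜 B)) 𝕜 B)
    (c : Fin (Module.finrank 𝕜 B) → 𝕜) (hc : ∑ i, c i • b i = 0) : ∀ i, c i = 0 :=
  Fintype.linearIndependent_iff.mp b.linearIndependent c hc


theorem cointegral_unique
    (δ : B →ₐ[𝕜] B ⊗[𝕜] B) (ε : B →ₐ[𝕜] 𝕜) (s : B →ₗ[𝕜] B)
    (coassoc : ∀ x : B, (TensorProduct.assoc 𝕜 B B B)
        ((TensorProduct.map δ.toLinearMap LinearMap.id) (δ x))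
      = (TensorProduct.map LinearMap.id δ.toLinearMap) (δ x))
    (counit_r : ∀ x : B, (TensorProduct.rid 𝕜 B)
      (TensorProduct.map LinearMap.id ε.toLinearMap (δ x)) = x)
    (counit_l : ∀ x : B, (TensorProduct.lid 𝕜 B)
      (TensorProduct.map ε.toLinearMap LinearMap.id (δ x)) = x)
    (anti_l : ∀ x : B, LinearMap.mul' 𝕜 B
      (TensorProduct.map s LinearMap.id (δ x)) = ε x • 1)
    (lam psi : B →ₗ[𝕜] 𝕜) (hlam : lam ≠ 0)
    (intlam : ∀ x : B, (TensorProduct.rid 𝕜 B)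
      (TensorProduct.map LinearMap.id lam (δ x)) = lam x • 1)
    (intpsi : ∀ x : B, (TensorProduct.rid 𝕜 B)
      (TensorProduct.map LinearMap.id psi (δ x)) = psi x • 1) :
    ∃ c : 𝕜, psi = c • lam := by
  classical
  set b : Module.Basis (Fin (Module.finrank 𝕜 B)) 𝕜 B := Module.finBasis 𝕜 B with hb
  have si := strong_invariance δ ε s coassoc counit_l anti_l lam intlam
  have extract : ∀ t : B ⊗[𝕜] B,
      (∀ a : B, (TensorProduct.rid 𝕜 B)
        (TensorProduct.map LinearMap.id lam ((1 ⊗ₜ[𝕜] a) * t)) = 0) →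
      ∀ i a, lam (a * tcomp b i t) = 0 := by
    intro t ht i a
    have h2 := ht a
    rw [one_tmul_mul, tmap_tmap, LinearMap.id_comp] at h2
    rw [rid_map_decomp b] at h2
    simpa using coeff_zero_of_sum b _ h2 i
  have nd_pre : ∀ h : B, (∀ x, lam (x * h) = 0) →
      ∀ a : B, (TensorProduct.rid 𝕜 B)
        (TensorProduct.map LinearMap.id lam ((1 ⊗ₜ[𝕜] a) * δ h)) = 0 := by
    intro h hN a
    rw [si a h]
    have hz : lam ∘ₗ LinearMap.mulRight 𝕜 h = 0 := by
      ext x; simpa using hN x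
    have hz2 : ((lam ∘ₗ LinearMap.mulRight 𝕜 h).smulRight (1 : B)) = 0 := by
      rw [hz]; ext x; simp
    rw [hz2, TensorProduct.map_zero_right]
    simp
  have eps_zero : ∀ h : B, (∀ x, lam (x * h) = 0) → ε h = 0 := by
    intro h hN
    have hcomps : ∀ i a, lam (a * tcomp b i (δ h)) = 0 := extract (δ h) (nd_pre h hN)
    obtain ⟨x₀, hx₀⟩ : ∃ x, lam x ≠ 0 := by
      by_contra h'
      push_neg at h'
      exact hlam (LinearMap.ext fun x => h' x)
    have h2 : LinearMap.mul' 𝕜 B (TensorProduct.map s LinearMap.id (δ h))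
        = ∑ i, s (b i) * tcomp b i (δ h) := by
      conv_lhs => rw [tensor_decomp b (δ h)]
      simp
    have hmain : lam (x₀ * (ε h • 1)) = 0 := by
      rw [← anti_l h, h2, Finset.mul_sum, map_sum]
      refine Finset.sum_eq_zero fun i _ => ?_
      rw [← mul_assoc]
      exact hcomps i _
    rw [mul_smul_comm, mul_one, map_smul, smul_eq_mul] at hmain
    rcases mul_eq_zero.mp hmain with h4 | h4
    · exact h4
    · exact absurd h4 hx₀
  have nd : ∀ h : B, (∀ x, lam (x * h) = 0) → h = 0 := by
    intro h hN
    have hcomps := extract (δ h) (nd_pre h hN)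
    have h1 : h = ∑ i, ε.toLinearMap (tcomp b i (δ h)) • b i := by
      conv_lhs => rw [← counit_r h]
      rw [rid_map_decomp b ε.toLinearMap (δ h)]
    rw [h1]
    refine Finset.sum_eq_zero fun i _ => ?_
    have : ε (tcomp b i (δ h)) = 0 := eps_zero _ (fun x => hcomps i x)
    simpa [this]
  -- the map h ↦ lam (· * h) is bijective onto the dual
  let beta : B →ₗ[𝕜] Module.Dual 𝕜 B :=
    { toFun := fun h => lam ∘ₗ LinearMap.mulRight 𝕜 h
      map_add' := fun h₁ h₂ => by ext x; simp [mul_add]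
      map_smul' := fun c h => by ext x; simp [mul_smul_comm] }
  have hinj : Function.Injective beta := by
    rw [injective_iff_map_eq_zero]
    intro h hh
    refine nd h fun x => ?_
    simpa [beta] using LinearMap.congr_fun hh x
  have hsurj : Function.Surjective beta :=
    (LinearMap.injective_iff_surjective_of_finrank_eq_finrank
      (Subspace.dual_finrank_eq (K := 𝕜) (V := B)).symm).mp hinj
  obtain ⟨d, hd⟩ := hsurj psi
  have hps : ∀ x, lam (x * d) = psi x := fun x => by
    simpa [beta] using LinearMap.congr_fun hd x
  have hone : δ (1 : B) = (1 : B) ⊗ₜ[𝕜] (1 : B) := by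
    rw [map_one, Algebra.TensorProduct.one_def]
  have hs1 : s 1 = 1 := by
    have h := anti_l 1
    rw [hone] at h
    simpa using h
  have hE : ∀ x : B, (TensorProduct.rid 𝕜 B)
      (TensorProduct.map LinearMap.id lam ((1 ⊗ₜ[𝕜] x) * δ d)) = psi x • 1 := by
    intro x
    rw [si x d]
    have h5 : lam ∘ₗ LinearMap.mulRight 𝕜 d = psi := by
      ext y; simpa using hps y
    rw [h5, mul'_map_smulRight s psi (δ x), intpsi x, map_smul, hs1]
  have ht0 : ∀ x : B, (TensorProduct.rid 𝕜 B)
      (TensorProduct.map LinearMap.id lam ((1 ⊗ₜ[𝕜] x) * (δ d - 1 ⊗ₜ[𝕜] d))) = 0 := by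
    intro x
    rw [mul_sub, map_sub, map_sub, hE x]
    have h6 : (1 ⊗ₜ[𝕜] x) * ((1 : B) ⊗ₜ[𝕜] d) = (1 : B) ⊗ₜ[𝕜] (x * d) := by
      rw [Algebra.TensorProduct.tmul_mul_tmul, one_mul]
    rw [h6]
    simp [hps x]
  have hcomps := extract _ ht0
  have htzero : δ d - 1 ⊗ₜ[𝕜] d = 0 := by
    rw [tensor_decomp b (δ d - 1 ⊗ₜ[𝕜] d)]
    refine Finset.sum_eq_zero fun i _ => ?_
    rw [nd _ (fun x => hcomps i x), tmul_zero]
  have hdd : δ d = 1 ⊗ₜ[𝕜] d := by rwa [sub_eq_zero] at htzero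
  have hd1 : d = ε d • 1 := by
    conv_lhs => rw [← counit_r d]
    rw [hdd]
    simp
  refine ⟨ε d, ?_⟩
  ext x
  have h8 : lam (x * d) = ε d • lam x := by
    conv_lhs => rw [hd1, mul_smul_comm, mul_one, map_smul]
  rw [LinearMap.smul_apply, ← hps x, h8]

end Main


section PartB

variable {A : G → Type w} [∀ p, Ring (A p)] [∀ p, Algebra k (A p)]

/-- Transport along an equality of indices, as an algebra map. -/
def castA {p q : G} (h : p = q) : A p →ₐ[k] A q := by subst h; exact AlgHom.id k _

lemma castA_apply {p q : G} (h : p = q) (a : A p) : castA k (A := A) h a = castL k A h a := by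
  subst h; rfl

lemma castL_eq_id {p : G} (h : p = p) : castL k A h = LinearMap.id := rfl

lemma castL_castL {p q r : G} (h1 : p = q) (h2 : q = r) (h3 : p = r) (a : A p) :
    castL k A h2 (castL k A h1 a) = castL k A h3 a := by
  subst h1; subst h2; rfl

lemma castL_self {p : G} (h : p = p) (a : A p) : castL k A h a = a := rfl

lemma fam_congr (f : ∀ p : G, A p →ₗ[k] k) {p q : G} (h : p = q) (a : A p) :
    f q (castL k A h a) = f p a := by subst h; rfl

lemma Δ_congr_left (H : HopfGCoalgebra k A) {p p' q : G} (hp : p = p')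
    (h2 : p * q = p' * q) (a : A (p * q)) :
    H.Δ p' q (castL k A h2 a)
      = TensorProduct.map (castL k A hp) LinearMap.id (H.Δ p q a) := by
  subst hp
  rw [castL_eq_id, castL_eq_id, TensorProduct.map_id]
  rfl

lemma Δ_congr_right (H : HopfGCoalgebra k A) {p q q' : G} (hq : q = q')
    (h2 : p * q = p * q') (a : A (p * q)) :
    H.Δ p q' (castL k A h2 a)
      = TensorProduct.map LinearMap.id (castL k A hq) (H.Δ p q a) := by
  subst hq
  rw [castL_eq_id, castL_eq_id, TensorProduct.map_id]
  rfl

lemma atp_map_eq {B B' C C' : Type w} [Ring B] [Algebra k B] [Ring B'] [Algebra k B']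
    [Ring C] [Algebra k C] [Ring C'] [Algebra k C']
    (f : B →ₐ[k] B') (g : C →ₐ[k] C') (x : B ⊗[k] C) :
    Algebra.TensorProduct.map f g x
      = TensorProduct.map f.toLinearMap g.toLinearMap x := by
  induction x using TensorProduct.induction_on with
  | zero => simp
  | tmul a b => simp
  | add u v hu hv => simp [hu, hv]

lemma atp_assoc_eq {B C D : Type w} [Ring B] [Algebra k B]
    [Ring C] [Algebra k C] [Ring D] [Algebra k D] (x : (B ⊗[k] C) ⊗[k] D) :
    (Algebra.TensorProduct.assoc k k k B C D) x = (TensorProduct.assoc k B C D) x := by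
  induction x using TensorProduct.induction_on with
  | zero => simp
  | tmul y d =>
      induction y using TensorProduct.induction_on with
      | zero => simp [TensorProduct.zero_tmul]
      | tmul a b => simp [Algebra.TensorProduct.assoc_tmul]
      | add u v hu hv => simp [TensorProduct.add_tmul, hu, hv]
  | add u v hu hv => simp [hu, hv]

end PartB

/-- left integrals on a finite-type Hopf `G`-coalgebra are unique
up to a scalar, once one is nonzero at some component. -/
theorem left_integral_unique
    {k : Type u} [Field k] {G : Type v} [Group G]
    (A : G → Type w) [∀ p, Ring (A p)] [∀ p, Algebra k (A p)]
    [∀ p, FiniteDimensional k (A p)]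
    (H : HopfGCoalgebra k A) (φ ψ : ∀ p : G, A p →ₗ[k] k)
    (hφ : H.IsLeftIntegral φ) (hψ : H.IsLeftIntegral ψ)
    (p₀ : G) (h₀ : φ p₀ ≠ 0) :
    ∃ c : k, ∀ p : G, ψ p = c • φ p := by
  classical
  set δ : A (1:G) →ₐ[k] A (1:G) ⊗[k] A (1:G) :=
    (H.Δ 1 1).comp (castA k (A := A) (one_mul (1:G)).symm) with hδdef
  set s : A (1:G) →ₗ[k] A (1:G) :=
    castL k A (inv_inv (1:G)) ∘ₗ H.S (1:G)⁻¹ ∘ₗ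
      castL k A ((inv_one : ((1:G))⁻¹ = 1)).symm with hsdef
  have hδ : ∀ x : A (1:G), δ x = H.Δ 1 1 (castL k A (one_mul (1:G)).symm x) := by
    intro x
    rw [hδdef, AlgHom.comp_apply, castA_apply]
  have e3 : δ.toLinearMap ∘ₗ castL k A (one_mul (1:G)) = (H.Δ 1 1).toLinearMap := by
    ext y
    simp only [LinearMap.comp_apply, AlgHom.toLinearMap_apply]
    rw [hδ, castL_castL (k := k) (one_mul (1:G)) (one_mul (1:G)).symm rfl y, castL_self]
  have hidl : (AlgHom.id k (A (1:G))).toLinearMap = LinearMap.id := rfl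
  -- coassociativity at the unit
  have hco : ∀ x : A (1:G),
      (TensorProduct.assoc k (A (1:G)) (A (1:G)) (A (1:G)))
          ((TensorProduct.map δ.toLinearMap LinearMap.id) (δ x))
        = (TensorProduct.map LinearMap.id δ.toLinearMap) (δ x) := by
    intro x
    have w : (1:G) = 1 * 1 * 1 := by simp
    have hc := H.coassoc 1 1 1 (castL k A w x)
    rw [atp_assoc_eq, atp_map_eq, atp_map_eq, hidl] at hc
    have e1 : H.Δ 1 1 (castL k A (one_mul (1:G)).symm x)
        = TensorProduct.map (castL k A (one_mul (1:G))) LinearMap.id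
            (H.Δ (1*1) 1 (castL k A w x)) := by
      rw [← Δ_congr_left (k := k) H (one_mul (1:G)) (by simp) (castL k A w x),
        castL_castL (k := k) w (by simp) (one_mul (1:G)).symm x]
    have e2 : H.Δ 1 1 (castL k A (one_mul (1:G)).symm x)
        = TensorProduct.map LinearMap.id (castL k A (one_mul (1:G)))
            (H.Δ 1 (1*1) (castL k A (mul_assoc 1 1 1) (castL k A w x))) := by
      rw [← Δ_congr_right (k := k) H (one_mul (1:G)) (by simp)
          (castL k A (mul_assoc 1 1 1) (castL k A w x)),
        castL_castL (k := k) w (mul_assoc 1 1 1) (by simp) x,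
        castL_castL (k := k) (by simp : (1:G) = 1 * (1*1)) (by simp) (one_mul (1:G)).symm x]
    calc (TensorProduct.assoc k (A (1:G)) (A (1:G)) (A (1:G)))
          ((TensorProduct.map δ.toLinearMap LinearMap.id) (δ x))
        = (TensorProduct.assoc k (A (1:G)) (A (1:G)) (A (1:G)))
            ((TensorProduct.map (H.Δ 1 1).toLinearMap LinearMap.id)
              (H.Δ (1*1) 1 (castL k A w x))) := by
          rw [hδ x, e1, tmap_tmap, LinearMap.id_comp, e3]
      _ = (TensorProduct.map LinearMap.id (H.Δ 1 1).toLinearMap)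
            (H.Δ 1 (1*1) (castL k A (mul_assoc 1 1 1) (castL k A w x))) := hc
      _ = (TensorProduct.map LinearMap.id δ.toLinearMap) (δ x) := by
          rw [hδ x, e2, tmap_tmap, LinearMap.id_comp, e3]
  -- counits at the unit
  have hcr : ∀ x : A (1:G), (TensorProduct.rid k (A (1:G)))
      (TensorProduct.map LinearMap.id H.ε.toLinearMap (δ x)) = x := by
    intro x
    have h := H.counit_right 1 (castL k A (one_mul (1:G)).symm x)
    rw [castL_castL (k := k) (one_mul (1:G)).symm (mul_one (1:G)) rfl x, castL_self] at h
    rw [hδ x]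
    exact h
  have hcl : ∀ x : A (1:G), (TensorProduct.lid k (A (1:G)))
      (TensorProduct.map H.ε.toLinearMap LinearMap.id (δ x)) = x := by
    intro x
    have h := H.counit_left 1 (castL k A (one_mul (1:G)).symm x)
    rw [castL_castL (k := k) (one_mul (1:G)).symm (one_mul (1:G)) rfl x, castL_self] at h
    rw [hδ x]
    exact h
  -- antipode at the unit
  have hanti : ∀ x : A (1:G), LinearMap.mul' k (A (1:G))
      ((TensorProduct.map s LinearMap.id) (δ x)) = H.ε x • 1 := by
    intro x
    have ha := H.antipode_left 1 (castL k A (inv_mul_cancel (1:G)).symm x)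
    rw [castL_castL (k := k) (inv_mul_cancel (1:G)).symm (inv_mul_cancel (1:G)) rfl x,
      castL_self] at ha
    have e4 : δ x = TensorProduct.map (castL k A (inv_one : ((1:G))⁻¹ = 1)) LinearMap.id
        (H.Δ (1:G)⁻¹ 1 (castL k A (inv_mul_cancel (1:G)).symm x)) := by
      rw [← Δ_congr_left (k := k) H (inv_one : ((1:G))⁻¹ = 1) (by simp)
          (castL k A (inv_mul_cancel (1:G)).symm x),
        castL_castL (k := k) (inv_mul_cancel (1:G)).symm (by simp) (one_mul (1:G)).symm x,
        hδ x]
    have e5 : s ∘ₗ castL k A (inv_one : ((1:G))⁻¹ = 1)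
        = (castL k A (inv_inv (1:G))).comp (H.S (1:G)⁻¹) := by
      ext y
      simp only [hsdef, LinearMap.comp_apply]
      rw [castL_castL (k := k) (inv_one : ((1:G))⁻¹ = 1)
        ((inv_one : ((1:G))⁻¹ = 1)).symm rfl y, castL_self]
    rw [e4, tmap_tmap, LinearMap.id_comp, e5]
    exact ha
  -- the integrals at the unit
  have hintφ : ∀ x : A (1:G), (TensorProduct.rid k (A (1:G)))
      (TensorProduct.map LinearMap.id (φ 1) (δ x)) = φ 1 x • 1 := by
    intro x
    have h := hφ 1 1 (castL k A (one_mul (1:G)).symm x)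
    rw [fam_congr (k := k) φ (one_mul (1:G)).symm x] at h
    rw [hδ x]
    exact h
  have hintψ : ∀ x : A (1:G), (TensorProduct.rid k (A (1:G)))
      (TensorProduct.map LinearMap.id (ψ 1) (δ x)) = ψ 1 x • 1 := by
    intro x
    have h := hψ 1 1 (castL k A (one_mul (1:G)).symm x)
    rw [fam_congr (k := k) ψ (one_mul (1:G)).symm x] at h
    rw [hδ x]
    exact h
  -- φ is nonzero at the unit
  have hone₀ : (1 : A p₀) ≠ 0 := by
    intro h1
    apply h₀
    ext y
    have hy : y = 0 := by rw [← mul_one y, h1, mul_zero]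
    rw [hy]
    simp
  have hφ1 : φ (1:G) ≠ 0 := by
    intro hzero
    obtain ⟨x, hx⟩ : ∃ x, φ p₀ x ≠ 0 := by
      by_contra h'
      push_neg at h'
      exact h₀ (LinearMap.ext fun y => h' y)
    have h := hφ p₀ 1 (castL k A (mul_one p₀).symm x)
    rw [fam_congr (k := k) φ (mul_one p₀).symm x, hzero, TensorProduct.map_zero_right] at h
    simp only [LinearMap.zero_apply, map_zero] at h
    rcases smul_eq_zero.mp h.symm with h2 | h2
    · exact hx h2
    · exact hone₀ h2
  -- uniqueness at the unit
  obtain ⟨c, hc⟩ := cointegral_unique δ H.ε s hco hcr hcl hanti (φ 1) (ψ 1)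
    hφ1 hintφ hintψ
  refine ⟨c, fun p => ?_⟩
  by_cases h1 : (1 : A p) = 0
  · ext x
    have hx0 : x = 0 := by rw [← mul_one x, h1, mul_zero]
    rw [hx0]
    simp
  · obtain ⟨f, hf⟩ := (LinearMap.toSpanSingleton k (A p) 1).exists_leftInverse_of_injective
      (LinearMap.ker_toSpanSingleton k h1)
    have hf1 : f 1 = 1 := by
      have h2 := LinearMap.congr_fun hf 1
      simpa using h2
    ext x
    have hφp := hφ p 1 (castL k A (mul_one p).symm x)
    rw [fam_congr (k := k) φ (mul_one p).symm x] at hφp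
    have hψp := hψ p 1 (castL k A (mul_one p).symm x)
    rw [fam_congr (k := k) ψ (mul_one p).symm x, hc] at hψp
    rw [TensorProduct.map_smul_right, LinearMap.smul_apply, map_smul, hφp] at hψp
    have h2 := congrArg f hψp
    simp only [map_smul, hf1, smul_eq_mul, mul_one] at h2
    simp only [LinearMap.smul_apply, smul_eq_mul]
    exact h2.symm
end

section
/- Let G be a finite group with unit e, k a field, H a Hopf algebra over k, and (H_p)_{p∈G} a G-cograding of H. Then ε(a) = 0 for every a ∈ H_p with p ≠ e, and S(H_p) ⊆ H_{p⁻¹} for every p ∈ G. -/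
noncomputable section

open TensorProduct

/-- A `G`-cograding of a Hopf algebra `H`: a family of submodules whose internal
direct sum is `H`, multiplying to `0` in different components and into themselves in
equal components, and such that the spans of `Δ(a)(1 ⊗ b)` resp. `(c ⊗ 1)Δ(a)`
recover the image of `H_p ⊗ H_q` in `H ⊗ H`. -/
structure GCograding (k : Type*) [Field k] (G : Type*) [Group G] [DecidableEq G]
    (H : Type*) [Ring H] [HopfAlgebra k H] where
  comp : G → Submodule k H
  internal : DirectSum.IsInternal comp
  mul_eq_zero : ∀ p q : G, p ≠ q → ∀ a ∈ comp p, ∀ b ∈ comp q, a * b = (0 : H)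
  mul_mem : ∀ p : G, ∀ a ∈ comp p, ∀ b ∈ comp p, a * b ∈ comp p
  comul_right : ∀ p q : G,
    Submodule.span k {z : H ⊗[k] H |
        ∃ a ∈ comp (p * q), ∃ b ∈ comp q,
          z = Coalgebra.comul (R := k) a * (1 ⊗ₜ[k] b)}
      = Submodule.span k {z : H ⊗[k] H | ∃ x ∈ comp p, ∃ y ∈ comp q, z = x ⊗ₜ[k] y}
  comul_left : ∀ p q : G,
    Submodule.span k {z : H ⊗[k] H |
        ∃ c ∈ comp p, ∃ a ∈ comp (p * q),
          z = (c ⊗ₜ[k] 1) * Coalgebra.comul (R := k) a}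
      = Submodule.span k {z : H ⊗[k] H | ∃ x ∈ comp p, ∃ y ∈ comp q, z = x ⊗ₜ[k] y}

section Aux

variable (k : Type*) [Field k] (H : Type*) [Ring H] [HopfAlgebra k H]

/-- The linear map `x ⊗ y ↦ ε(y) • x`. -/
def cogradingEmap : H ⊗[k] H →ₗ[k] H :=
  (TensorProduct.rid k H).toLinearMap ∘ₗ
    LinearMap.lTensor H (Coalgebra.counit (R := k) (A := H))

@[simp] lemma cogradingEmap_tmul (x y : H) :
    cogradingEmap k H (x ⊗ₜ[k] y) = Coalgebra.counit (R := k) y • x := by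
  simp [cogradingEmap]

@[simp] lemma cogradingEmap_comul (a : H) :
    cogradingEmap k H (Coalgebra.comul (R := k) a) = a := by
  simp [cogradingEmap, Coalgebra.lTensor_counit_comul]

/-- The linear map `x ⊗ y ↦ S(x) * y`. -/
def cogradingFmap : H ⊗[k] H →ₗ[k] H :=
  LinearMap.mul' k H ∘ₗ LinearMap.rTensor H (HopfAlgebra.antipode (R := k) (A := H))

@[simp] lemma cogradingFmap_tmul (x y : H) :
    cogradingFmap k H (x ⊗ₜ[k] y) = HopfAlgebra.antipode (R := k) x * y := by
  simp [cogradingFmap]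

@[simp] lemma cogradingFmap_comul (a : H) :
    cogradingFmap k H (Coalgebra.comul (R := k) a) =
      algebraMap k H (Coalgebra.counit (R := k) a) := by
  simp only [cogradingFmap, LinearMap.coe_comp, Function.comp_apply]; exact HopfAlgebra.mul_antipode_rTensor_comul_apply (R := k) a

lemma cogradingFmap_mul_right (z : H ⊗[k] H) (b : H) :
    cogradingFmap k H (z * (1 ⊗ₜ[k] b)) = cogradingFmap k H z * b := by
  induction z using TensorProduct.induction_on with
  | zero => simp
  | tmul x y => simp [Algebra.TensorProduct.tmul_mul_tmul, mul_assoc]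
  | add z w hz hw => rw [add_mul, map_add, map_add, add_mul, hz, hw]

end Aux

/-- in a `G`-cograded Hopf algebra, the counit vanishes on `H_p` for
`p ≠ e` and the antipode maps `H_p` into `H_{p⁻¹}`. -/
theorem counit_antipode_of_cograding
    {k : Type*} [Field k] {G : Type*} [Group G] [DecidableEq G] [Fintype G]
    {H : Type*} [Ring H] [HopfAlgebra k H]
    (c : GCograding k G H) :
    (∀ p : G, p ≠ 1 → ∀ a ∈ c.comp p, Coalgebra.counit (R := k) a = 0) ∧
    (∀ p : G, ∀ a ∈ c.comp p, HopfAlgebra.antipode (R := k) a ∈ c.comp p⁻¹) := by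
  classical
  -- decomposition of 1
  obtain ⟨x, hx⟩ := c.internal.surjective 1
  set u : G → H := fun p => (x p : H) with hu_def
  have hu : ∀ p, u p ∈ c.comp p := fun p => (x p).2
  have hsum : ∑ p, u p = 1 := by
    rw [← hx]
    conv_rhs => rw [← DirectSum.sum_univ_of x]
    rw [map_sum]
    exact Finset.sum_congr rfl fun p _ => (DirectSum.coeAddMonoidHom_of _ _ _).symm
  -- there is a component where the counit does not vanish
  have hexists : ∃ p₀ : G, Coalgebra.counit (R := k) (u p₀) ≠ 0 := by
    by_contra h
    push_neg at h
    have : (Coalgebra.counit (R := k) (1 : H)) = 0 := by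
      rw [← hsum, map_sum]
      exact Finset.sum_eq_zero fun p _ => h p
    rw [Bialgebra.counit_one] at this
    exact one_ne_zero this
  obtain ⟨p₀, hp₀⟩ := hexists
  -- the counit vanishes on every other component
  have hvanish : ∀ r : G, r ≠ p₀ → ∀ a ∈ c.comp r, Coalgebra.counit (R := k) a = 0 := by
    intro r hr a ha
    have h0 : a * u p₀ = 0 := c.mul_eq_zero r p₀ hr a ha (u p₀) (hu p₀)
    have : Coalgebra.counit (R := k) a * Coalgebra.counit (R := k) (u p₀) = 0 := by
      rw [← Bialgebra.counit_mul, h0, map_zero]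
    exact (mul_eq_zero.mp this).resolve_right hp₀
  -- p₀ is the unit of the group
  have hp₀e : p₀ = 1 := by
    by_contra hne
    -- decompose comul (u p₀)
    have hdecomp : Coalgebra.comul (R := k) (u p₀) =
        ∑ q, Coalgebra.comul (R := k) (u p₀) * ((1 : H) ⊗ₜ[k] u q) := by
      rw [← Finset.mul_sum, ← TensorProduct.tmul_sum, hsum,
        ← Algebra.TensorProduct.one_def, mul_one]
    have hz : ∀ q : G, Coalgebra.comul (R := k) (u p₀) * ((1 : H) ⊗ₜ[k] u q) ∈
        Submodule.span k {z : H ⊗[k] H |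
          ∃ x ∈ c.comp (p₀ * q⁻¹), ∃ y ∈ c.comp q, z = x ⊗ₜ[k] y} := by
      intro q
      rw [← c.comul_right (p₀ * q⁻¹) q]
      refine Submodule.subset_span ⟨u p₀, ?_, u q, hu q, rfl⟩
      rw [inv_mul_cancel_right]
      exact hu p₀
    have hkey : u p₀ ∈ c.comp 1 := by
      have h1 : u p₀ = ∑ q, cogradingEmap k H
          (Coalgebra.comul (R := k) (u p₀) * ((1 : H) ⊗ₜ[k] u q)) := by
        rw [← map_sum, ← hdecomp, cogradingEmap_comul]
      rw [h1]
      refine Submodule.sum_mem _ fun q _ => ?_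
      by_cases hq : q = p₀
      · subst hq
        have hle : Submodule.span k {z : H ⊗[k] H |
            ∃ x ∈ c.comp (q * q⁻¹), ∃ y ∈ c.comp q, z = x ⊗ₜ[k] y} ≤
            Submodule.comap (cogradingEmap k H) (c.comp 1) := by
          rw [Submodule.span_le]
          rintro z ⟨x, hxm, y, hym, rfl⟩
          simp only [SetLike.mem_coe, Submodule.mem_comap, cogradingEmap_tmul]
          rw [mul_inv_cancel] at hxm
          exact Submodule.smul_mem _ _ hxm
        exact hle (hz q)
      · have hle : Submodule.span k {z : H ⊗[k] H |
            ∃ x ∈ c.comp (p₀ * q⁻¹), ∃ y ∈ c.comp q, z = x ⊗ₜ[k] y} ≤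
            LinearMap.ker (cogradingEmap k H) := by
          rw [Submodule.span_le]
          rintro z ⟨x, hxm, y, hym, rfl⟩
          simp only [SetLike.mem_coe, LinearMap.mem_ker, cogradingEmap_tmul]
          rw [hvanish q hq y hym, zero_smul]
        have : cogradingEmap k H
            (Coalgebra.comul (R := k) (u p₀) * ((1 : H) ⊗ₜ[k] u q)) = 0 :=
          hle (hz q)
        rw [this]
        exact Submodule.zero_mem _
    have hdisj : Disjoint (c.comp p₀) (c.comp 1) :=
      c.internal.submodule_iSupIndep.pairwiseDisjoint hne
    have : u p₀ = 0 := Submodule.disjoint_def.mp hdisj (u p₀) (hu p₀) hkey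
    rw [this, map_zero] at hp₀
    exact hp₀ rfl
  subst hp₀e
  refine ⟨fun p hp a ha => hvanish p hp a ha, ?_⟩
  -- antipode part
  have hFset : ∀ r q : G, ∀ a ∈ c.comp r, ∀ b ∈ c.comp q,
      (a ⊗ₜ[k] b) ∈ Submodule.span k {z : H ⊗[k] H |
        ∃ a' ∈ c.comp (r * q), ∃ b' ∈ c.comp q,
          z = Coalgebra.comul (R := k) a' * (1 ⊗ₜ[k] b')} := by
    intro r q a ha b hb
    rw [c.comul_right r q]
    exact Submodule.subset_span ⟨a, ha, b, hb, rfl⟩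
  have hzero : ∀ r q : G, r * q ≠ 1 → ∀ a ∈ c.comp r, ∀ b ∈ c.comp q,
      HopfAlgebra.antipode (R := k) a * b = 0 := by
    intro r q hrq a ha b hb
    have hle : Submodule.span k {z : H ⊗[k] H |
        ∃ a' ∈ c.comp (r * q), ∃ b' ∈ c.comp q,
          z = Coalgebra.comul (R := k) a' * (1 ⊗ₜ[k] b')} ≤
        LinearMap.ker (cogradingFmap k H) := by
      rw [Submodule.span_le]
      rintro z ⟨a', ha', b', hb', rfl⟩
      simp only [SetLike.mem_coe, LinearMap.mem_ker]
      rw [cogradingFmap_mul_right, cogradingFmap_comul,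
        hvanish (r * q) hrq a' ha', map_zero, zero_mul]
    have := hle (hFset r q a ha b hb)
    rw [LinearMap.mem_ker, cogradingFmap_tmul] at this
    exact this
  have hmem : ∀ r q : G, ∀ a ∈ c.comp r, ∀ b ∈ c.comp q,
      HopfAlgebra.antipode (R := k) a * b ∈ c.comp q := by
    intro r q a ha b hb
    have hle : Submodule.span k {z : H ⊗[k] H |
        ∃ a' ∈ c.comp (r * q), ∃ b' ∈ c.comp q,
          z = Coalgebra.comul (R := k) a' * (1 ⊗ₜ[k] b')} ≤
        Submodule.comap (cogradingFmap k H) (c.comp q) := by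
      rw [Submodule.span_le]
      rintro z ⟨a', ha', b', hb', rfl⟩
      simp only [SetLike.mem_coe, Submodule.mem_comap]
      rw [cogradingFmap_mul_right, cogradingFmap_comul, ← Algebra.smul_def]
      exact Submodule.smul_mem _ _ hb'
    have := hle (hFset r q a ha b hb)
    rw [Submodule.mem_comap, cogradingFmap_tmul] at this
    exact this
  intro p a ha
  have hS : HopfAlgebra.antipode (R := k) a = HopfAlgebra.antipode (R := k) a * u p⁻¹ := by
    calc HopfAlgebra.antipode (R := k) a
        = HopfAlgebra.antipode (R := k) a * 1 := (mul_one _).symm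
      _ = ∑ q, HopfAlgebra.antipode (R := k) a * u q := by rw [← hsum, Finset.mul_sum]
      _ = HopfAlgebra.antipode (R := k) a * u p⁻¹ := by
          refine Finset.sum_eq_single p⁻¹ (fun q _ hq => ?_)
            (fun h => absurd (Finset.mem_univ p⁻¹) h)
          refine hzero p q (fun h => hq ?_) a ha (u q) (hu q)
          exact eq_inv_of_mul_eq_one_right h
  rw [hS]
  exact hmem p p⁻¹ a ha (u p⁻¹) (hu p⁻¹)
end
end
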